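/- arXiv:1007.3016 — 2 statements merged into one kernel-verified Lean document; each statement's English description precedes it below -/
import Mathlib

section
/- Let F, G : ℝ² → ℝ be smooth with Jacobian determinant μ nowhere zero, and define ξ'_F = (1/μ)(−∂_y F, ∂_x F), ξ'_G = (1/μ)(∂_y G, −∂_x G). Then the Lie bracket [ξ'_F, ξ'_G] vanishes identically. -/
open ContinuousLinearMap

private lemma hasFDerivAt_pd (f : ℝ × ℝ → ℝ) (hf : ContDiff ℝ (⊤ : ℕ∞) f) (v : ℝ × ℝ) (p : ℝ × ℝ) :
    HasFDerivAt (fun q => fderiv ℝ f q v)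
      ((ContinuousLinearMap.apply ℝ ℝ v).comp (fderiv ℝ (fderiv ℝ f) p)) p := by
  have h1 : DifferentiableAt ℝ (fderiv ℝ f) p :=
    ((hf.fderiv_right (m := 1) (by exact WithTop.coe_le_coe.mpr le_top)).differentiable one_ne_zero).differentiableAt
  exact (ContinuousLinearMap.apply ℝ ℝ v).hasFDerivAt.comp p h1.hasFDerivAt

private lemma symm2 (f : ℝ × ℝ → ℝ) (hf : ContDiff ℝ (⊤ : ℕ∞) f) (p v w : ℝ × ℝ) :
    fderiv ℝ (fderiv ℝ f) p v w = fderiv ℝ (fderiv ℝ f) p w v :=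
  (hf.contDiffAt.isSymmSndFDerivAt (by rw [minSmoothness_of_isRCLikeNormedField]; exact WithTop.coe_le_coe.mpr (le_top : (2:ℕ∞) ≤ ⊤))) v w

private lemma clm_eval {M : Type*} [NormedAddCommGroup M] [NormedSpace ℝ M]
    (L : ℝ × ℝ →L[ℝ] M) (x y : ℝ) :
    L (x, y) = x • L (1, 0) + y • L (0, 1) := by
  have h : (x, y) = x • ((1:ℝ), (0:ℝ)) + y • ((0:ℝ), (1:ℝ)) := by simp
  rw [h, map_add, map_smul, map_smul]

set_option maxHeartbeats 2000000 in
/-- The normalized Hamiltonian vector fields `ξ'_F` and `ξ'_G` commute: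
`[ξ'_F, ξ'_G] = (Dξ'_G)ξ'_F − (Dξ'_F)ξ'_G = 0`. -/
theorem stmt_3 (F G : ℝ × ℝ → ℝ) (hF : ContDiff ℝ (⊤ : ℕ∞) F) (hG : ContDiff ℝ (⊤ : ℕ∞) G)
    (μ : ℝ × ℝ → ℝ)
    (hμ : ∀ p : ℝ × ℝ, μ p = fderiv ℝ F p (1, 0) * fderiv ℝ G p (0, 1)
        - fderiv ℝ F p (0, 1) * fderiv ℝ G p (1, 0))
    (hμ0 : ∀ p : ℝ × ℝ, μ p ≠ 0)
    (ξF ξG : ℝ × ℝ → ℝ × ℝ)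
    (hξF : ∀ p : ℝ × ℝ, ξF p = (μ p)⁻¹ • ((-(fderiv ℝ F p (0, 1))), fderiv ℝ F p (1, 0)))
    (hξG : ∀ p : ℝ × ℝ, ξG p = (μ p)⁻¹ • (fderiv ℝ G p (0, 1), -(fderiv ℝ G p (1, 0)))) :
    ∀ p : ℝ × ℝ, fderiv ℝ ξG p (ξF p) - fderiv ℝ ξF p (ξG p) = 0 := by
  have hμ' : μ = fun p => fderiv ℝ F p (1, 0) * fderiv ℝ G p (0, 1)
      - fderiv ℝ F p (0, 1) * fderiv ℝ G p (1, 0) := funext hμ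
  have hξF' : ξF = fun p => (μ p)⁻¹ • ((-(fderiv ℝ F p (0, 1))), fderiv ℝ F p (1, 0)) :=
    funext hξF
  have hξG' : ξG = fun p => (μ p)⁻¹ • (fderiv ℝ G p (0, 1), -(fderiv ℝ G p (1, 0))) :=
    funext hξG
  intro p
  subst hμ' hξF' hξG'
  have hμd := ((hasFDerivAt_pd F hF (1,0) p).mul (hasFDerivAt_pd G hG (0,1) p)).sub
      ((hasFDerivAt_pd F hF (0,1) p).mul (hasFDerivAt_pd G hG (1,0) p))
  have hinv := (hasDerivAt_inv (hμ0 p)).comp_hasFDerivAt p hμd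
  have hpairG := (hasFDerivAt_pd G hG (0,1) p).prodMk (hasFDerivAt_pd G hG (1,0) p).neg
  have hpairF := ((hasFDerivAt_pd F hF (0,1) p).neg).prodMk (hasFDerivAt_pd F hF (1,0) p)
  have hξGd := hinv.smul hpairG
  have hξFd := hinv.smul hpairF
  simp only [Function.comp_def, Pi.mul_def, Pi.sub_def, Pi.neg_def, Pi.smul_def'] at hξGd hξFd
  beta_reduce
  set A := fderiv ℝ (fderiv ℝ F) p with hA
  set B := fderiv ℝ (fderiv ℝ G) p with hB
  rw [hξGd.fderiv, hξFd.fderiv]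
  simp only [ContinuousLinearMap.add_apply, ContinuousLinearMap.smul_apply,
    ContinuousLinearMap.smulRight_apply, ContinuousLinearMap.coe_comp',
    Function.comp_apply, ContinuousLinearMap.apply_apply, ContinuousLinearMap.sub_apply,
    ContinuousLinearMap.neg_apply, ContinuousLinearMap.prod_apply, map_smul, map_neg,
    smul_eq_mul, Prod.smul_mk, Prod.mk_add_mk, Prod.neg_mk, Prod.mk_sub_mk, Prod.mk_eq_zero]
  rw [clm_eval A ((fderiv ℝ F p (1,0) * fderiv ℝ G p (0,1) - fderiv ℝ F p (0,1) * fderiv ℝ G p (1,0))⁻¹ * -(fderiv ℝ F p (0,1))) ((fderiv ℝ F p (1,0) * fderiv ℝ G p (0,1) - fderiv ℝ F p (0,1) * fderiv ℝ G p (1,0))⁻¹ * fderiv ℝ F p (1,0))]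
  rw [clm_eval A ((fderiv ℝ F p (1,0) * fderiv ℝ G p (0,1) - fderiv ℝ F p (0,1) * fderiv ℝ G p (1,0))⁻¹ * fderiv ℝ G p (0,1)) ((fderiv ℝ F p (1,0) * fderiv ℝ G p (0,1) - fderiv ℝ F p (0,1) * fderiv ℝ G p (1,0))⁻¹ * -(fderiv ℝ G p (1,0)))]
  rw [clm_eval B ((fderiv ℝ F p (1,0) * fderiv ℝ G p (0,1) - fderiv ℝ F p (0,1) * fderiv ℝ G p (1,0))⁻¹ * -(fderiv ℝ F p (0,1))) ((fderiv ℝ F p (1,0) * fderiv ℝ G p (0,1) - fderiv ℝ F p (0,1) * fderiv ℝ G p (1,0))⁻¹ * fderiv ℝ F p (1,0))]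
  rw [clm_eval B ((fderiv ℝ F p (1,0) * fderiv ℝ G p (0,1) - fderiv ℝ F p (0,1) * fderiv ℝ G p (1,0))⁻¹ * fderiv ℝ G p (0,1)) ((fderiv ℝ F p (1,0) * fderiv ℝ G p (0,1) - fderiv ℝ F p (0,1) * fderiv ℝ G p (1,0))⁻¹ * -(fderiv ℝ G p (1,0)))]
  simp only [ContinuousLinearMap.add_apply, ContinuousLinearMap.smul_apply, smul_eq_mul]
  have hsF : A (0,1) (1,0) = A (1,0) (0,1) := symm2 F hF p (0,1) (1,0)
  have hsG : B (0,1) (1,0) = B (1,0) (0,1) := symm2 G hG p (0,1) (1,0)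
  rw [hsF, hsG]
  have hm0 : fderiv ℝ F p (1,0) * fderiv ℝ G p (0,1) - fderiv ℝ F p (0,1) * fderiv ℝ G p (1,0) ≠ 0 := hμ0 p
  set a := fderiv ℝ F p (1,0) with ha
  set b := fderiv ℝ F p (0,1) with hb
  set c := fderiv ℝ G p (1,0) with hc
  set d := fderiv ℝ G p (0,1) with hd
  set A11 := A (1,0) (1,0) with hA11
  set A12 := A (1,0) (0,1) with hA12
  set A22 := A (0,1) (0,1) with hA22
  set B11 := B (1,0) (1,0) with hB11
  set B12 := B (1,0) (0,1) with hB12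
  set B22 := B (0,1) (0,1) with hB22
  clear hξGd hξFd hinv hμd hpairF hpairG hμ hμ0 hξF hξG hsF hsG
  set m := a * d - b * c with hm
  clear_value A B a b c d A11 A12 A22 B11 B12 B22 m
  clear hA hB ha hb hc hd hA11 hA12 hA22 hB11 hB12 hB22 hF hG
  constructor
  · field_simp
    rw [hm]
    ring
  · field_simp
    rw [hm]
    ring
end

section
/- Let ξ'_F(x,y) = (1/(2e^x(1+y²)))·(2y, 1−y²). Then the continuous function f(x,y) = (1−y²)e^x(x + 2 log|1+y|), defined on ℝ² ∖ {y = −1} and extended by 0 on y = −1, is continuous on ℝ², smooth on ℝ² ∖ {y = −1}, and satisfies L_{ξ'_F} f = (1−y²)/(1+y²) on ℝ² ∖ {y = −1}. -/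
open Real

/-- The function `f(x,y) = (1−y²)eˣ(x + 2 log|1+y|)`, extended by `0` on
`{y = −1}`, is continuous on ℝ², smooth away from `{y = −1}`, and satisfies
`L_{ξ'_F} f = (1−y²)/(1+y²)` away from `{y = −1}`, where
`ξ'_F(x,y) = (1/(2eˣ(1+y²)))·(2y, 1−y²)`. -/
theorem stmt_12 :
    let f : ℝ × ℝ → ℝ := fun p =>
      if p.2 = -1 then 0
      else (1 - p.2 ^ 2) * Real.exp p.1 * (p.1 + 2 * Real.log |1 + p.2|)
    Continuous f ∧
    ContDiffOn ℝ (⊤ : ℕ∞) f {p : ℝ × ℝ | p.2 ≠ -1} ∧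
    ∀ p : ℝ × ℝ, p.2 ≠ -1 →
      fderiv ℝ f p
        ((2 * Real.exp p.1 * (1 + p.2 ^ 2))⁻¹ • ((2 * p.2, 1 - p.2 ^ 2) : ℝ × ℝ))
      = (1 - p.2 ^ 2) / (1 + p.2 ^ 2) := by
  intro f
  have hopen : IsOpen {p : ℝ × ℝ | p.2 ≠ -1} :=
    isOpen_ne.preimage continuous_snd
  -- f equals F everywhere, F continuous
  have hfF : f = fun p : ℝ × ℝ =>
      (1 - p.2) * Real.exp p.1 *
        (p.1 * (1 + p.2) + 2 * ((1 + p.2) * Real.log (1 + p.2))) := by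
    funext p
    simp only [f]
    split_ifs with h
    · rw [h]; ring_nf
    · have h1 : (1 : ℝ) + p.2 ≠ 0 := by
        intro h0; apply h; linarith
      rw [Real.log_abs]
      ring
  have hcont : Continuous f := by
    rw [hfF]
    exact ((continuous_const.sub continuous_snd).mul
      ((Real.continuous_exp.comp continuous_fst))).mul
      ((continuous_fst.mul (continuous_const.add continuous_snd)).add
        (continuous_const.mul
          (Real.continuous_mul_log.comp (continuous_const.add continuous_snd))))
  -- the smooth formula on the open set
  set g : ℝ × ℝ → ℝ := fun p =>
    (1 - p.2 ^ 2) * Real.exp p.1 * (p.1 + 2 * Real.log (1 + p.2)) with hg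
  have hfg : ∀ p : ℝ × ℝ, p.2 ≠ -1 → f p = g p := by
    intro p hp
    simp only [f, g, if_neg hp, Real.log_abs]
  refine ⟨hcont, ?_, ?_⟩
  · have hsmooth : ContDiffOn ℝ (⊤ : ℕ∞) g {p : ℝ × ℝ | p.2 ≠ -1} := by
      intro p hp
      have h1 : (1 : ℝ) + p.2 ≠ 0 := fun h0 => hp (by simp only [Set.mem_setOf_eq] at *; linarith)
      apply ContDiffAt.contDiffWithinAt
      apply ContDiffAt.mul
      · exact ((contDiffAt_const.sub ((contDiffAt_snd).pow 2)).mul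
          (Real.contDiff_exp.contDiffAt.comp p contDiffAt_fst))
      · exact contDiffAt_fst.add (contDiffAt_const.mul
          ((Real.contDiffAt_log.2 h1).comp p (contDiffAt_const.add contDiffAt_snd)))
    exact hsmooth.congr hfg
  · intro p hp
    have h1 : (1 : ℝ) + p.2 ≠ 0 := fun h0 => hp (by linarith)
    have hsnd : HasFDerivAt (fun q : ℝ × ℝ => q.2) (ContinuousLinearMap.snd ℝ ℝ ℝ) p :=
      hasFDerivAt_snd
    have hfst : HasFDerivAt (fun q : ℝ × ℝ => q.1) (ContinuousLinearMap.fst ℝ ℝ ℝ) p :=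
      hasFDerivAt_fst
    have hsq : HasFDerivAt (fun q : ℝ × ℝ => q.2 ^ 2)
        (p.2 • (ContinuousLinearMap.snd ℝ ℝ ℝ) + p.2 • (ContinuousLinearMap.snd ℝ ℝ ℝ)) p := by
      have := hsnd.mul hsnd; simp only [sq]; exact this
    have hA := (hasFDerivAt_const (1:ℝ) p).sub hsq
    have hE : HasFDerivAt (fun q : ℝ × ℝ => Real.exp q.1)
        ((Real.exp p.1) • (ContinuousLinearMap.fst ℝ ℝ ℝ)) p :=
      (Real.hasDerivAt_exp p.1).comp_hasFDerivAt p hasFDerivAt_fst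
    have hlin : HasFDerivAt (fun q : ℝ × ℝ => 1 + q.2) (ContinuousLinearMap.snd ℝ ℝ ℝ) p := by
      have := (hasFDerivAt_const (1:ℝ) p).add hsnd
      rwa [zero_add] at this
    have hL : HasFDerivAt (fun q : ℝ × ℝ => Real.log (1 + q.2))
        (((1 + p.2)⁻¹ : ℝ) • (ContinuousLinearMap.snd ℝ ℝ ℝ)) p :=
      by have := (Real.hasDerivAt_log h1).comp_hasFDerivAt p hlin; exact this
    have hS := hfst.add (hL.const_mul (2:ℝ))
    have hgD := (hA.mul hE).mul hS
    have hfd : fderiv ℝ f p = fderiv ℝ g p := by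
      apply Filter.EventuallyEq.fderiv_eq
      filter_upwards [hopen.mem_nhds hp] with q hq
      exact hfg q hq
    rw [hfd, (show HasFDerivAt g _ p from hgD).fderiv]
    have e1 : Real.exp p.1 ≠ 0 := Real.exp_ne_zero _
    have e2 : (1 : ℝ) + p.2 ^ 2 ≠ 0 := by positivity
    simp only [ContinuousLinearMap.add_apply, ContinuousLinearMap.smul_apply,
      ContinuousLinearMap.sub_apply, ContinuousLinearMap.zero_apply,
      ContinuousLinearMap.coe_fst', ContinuousLinearMap.coe_snd',
      smul_eq_mul, Pi.mul_apply, Pi.sub_apply, Pi.add_apply, Prod.smul_mk]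
    field_simp
    ring
end
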